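/- Let x and y be left I-states of size k that are not too far, with generating intervals [j_i+1, j_i+l_i] for 1 ≤ i ≤ n−k, and set d = Σ_{i=1}^{k} |x_i − y_i|. Then the following identity holds in ℤ[q]: Σ_z Σ_{σ ∈ S_k} q^{d + 2·inv(σ) + 2·Σ_{i=1}^{n−k}(h_i^z − j_i)} = q^d · (k)!_{q²} · Π_{i=1}^{n−k} (l_i)_{q²}, where the outer sum runs over left I-states z of size k satisfying j_i ≤ h_i^z < j_i + l_i for all 1 ≤ i ≤ n−k, and inv(σ) denotes the number of inversions of the permutation σ ∈ S_k. (The left-hand side is the graded rank of the free abelian group Z_{μ,λ} spanned by enhanced oriented fork diagrams for the sequences μ, λ corresponding to x, y.) -/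

import Mathlib

/-- The `i`-th smallest element (0-indexed) of a finite set of natural numbers. -/
def nthElt (s : Finset ℕ) (i : ℕ) : ℕ := (s.sort (· ≤ ·)).getD i 0

/-- The hole set of an I-state: the complement `{0, …, n} \ s`. -/
def holes (n : ℕ) (s : Finset ℕ) : Finset ℕ := Finset.range (n + 1) \ s

/-- The `i`-th hole (0-indexed): `hnth n s i` is `h_{i+1}^s` in 1-indexed notation. -/
def hnth (n : ℕ) (s : Finset ℕ) (i : ℕ) : ℕ := nthElt (holes n s) i

/-- Two I-states of size `k` are too far if `|x_i − y_i| > 1` for some `i`. -/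
def TooFar (k : ℕ) (x y : Finset ℕ) : Prop :=
  ∃ i < k, 1 < ((nthElt x i : ℤ) - (nthElt y i : ℤ)).natAbs

/-- The condition `max(h_i^x, h_i^y) ≤ h_i^z < min(h_{i+1}^x, h_{i+1}^y)` for all
`1 ≤ i ≤ n − k` (0-indexed). -/
def OrientedZ (n k : ℕ) (x y z : Finset ℕ) : Prop :=
  ∀ i < n - k, max (hnth n x i) (hnth n y i) ≤ hnth n z i ∧
    hnth n z i < min (hnth n x (i + 1)) (hnth n y (i + 1))

instance (n k : ℕ) (x y z : Finset ℕ) : Decidable (OrientedZ n k x y z) := by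
  unfold OrientedZ; infer_instance

/-- The nonsymmetric quantum integer `(m)_{q²} = 1 + q² + ⋯ + q^{2(m−1)}` in `ℤ[q]`. -/
noncomputable def qInt (m : ℕ) : Polynomial ℤ :=
  ∑ j ∈ Finset.range m, Polynomial.X ^ (2 * j)

/-- The nonsymmetric quantum factorial `(k)!_{q²} = (k)_{q²} (k−1)_{q²} ⋯ (1)_{q²}`. -/
noncomputable def qFact (k : ℕ) : Polynomial ℤ :=
  ∏ j ∈ Finset.range k, qInt (j + 1)

/-- The number of inversions of a permutation `σ ∈ S_k`. -/
def invCount {k : ℕ} (σ : Equiv.Perm (Fin k)) : ℕ :=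
  (Finset.univ.filter (fun p : Fin k × Fin k => p.1 < p.2 ∧ σ p.2 < σ p.1)).card

/-!
The sums over `σ` and over `z` separate. A permutation of `Fin (k + 1)` is determined by
`p = σ 0` and the permutation it induces on the remaining entries, and `σ 0` forms exactly `p`
inversions with the later entries; so `Σ_σ t^{inv σ}` obeys the recursion of the `t`-factorial.
A left I-state `z` is determined by its first `n − k` holes (the last hole is `n`), and since each
generating interval ends no later than the next one starts, every choice `h_i ∈ [j_i, j_i + l_i)`
is a strictly increasing hole sequence; hence the `z`-sum is the product of the `(l_i)_{q²}`.
-/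

open Finset Polynomial

lemma nthElt_eq_orderEmbOfFin {s : Finset ℕ} {c : ℕ} (h : s.card = c) (i : Fin c) :
    nthElt s i = s.orderEmbOfFin h i := by
  rw [nthElt, orderEmbOfFin_apply, List.getD_eq_getElem?_getD,
    List.getElem?_eq_getElem (by rw [length_sort, h]; exact i.2), Option.getD_some]
  rfl

lemma nthElt_eq_zero_of_card_le {s : Finset ℕ} {i : ℕ} (hi : s.card ≤ i) : nthElt s i = 0 :=
  List.getD_eq_default _ _ (by rwa [length_sort])

lemma nthElt_mem {s : Finset ℕ} {i : ℕ} (hi : i < s.card) : nthElt s i ∈ s := by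
  rw [nthElt_eq_orderEmbOfFin rfl ⟨i, hi⟩]
  exact orderEmbOfFin_mem s rfl _

lemma nthElt_lt_nthElt {s : Finset ℕ} {i j : ℕ} (hij : i < j) (hj : j < s.card) :
    nthElt s i < nthElt s j := by
  rw [nthElt_eq_orderEmbOfFin rfl ⟨i, hij.trans hj⟩, nthElt_eq_orderEmbOfFin rfl ⟨j, hj⟩]
  exact (s.orderEmbOfFin rfl).strictMono hij

lemma nthElt_image_univ {c : ℕ} {f : Fin c → ℕ} (hf : StrictMono f) (i : Fin c) :
    nthElt (univ.image f) i = f i := by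
  have hcard : (univ.image f).card = c := by
    rw [card_image_of_injective _ hf.injective, card_univ, Fintype.card_fin]
  rw [nthElt_eq_orderEmbOfFin hcard,
    ← orderEmbOfFin_unique hcard (fun j => mem_image_of_mem f (mem_univ j)) hf]

lemma card_holes {n : ℕ} {s : Finset ℕ} (hs : s ⊆ range (n + 1)) :
    (holes n s).card = n + 1 - s.card := by
  rw [holes, card_sdiff_of_subset hs, card_range]

lemma hnth_le (n : ℕ) (s : Finset ℕ) (i : ℕ) : hnth n s i ≤ n := by
  rcases lt_or_ge i (holes n s).card with hi | hi
  · have := nthElt_mem hi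
    rw [holes, mem_sdiff, mem_range] at this
    rw [hnth, holes]
    omega
  · rw [hnth, nthElt_eq_zero_of_card_le hi]
    omega

lemma Fin.strictMono_snoc {m : ℕ} {h : Fin m → ℕ} (hmono : StrictMono h) {a : ℕ}
    (hlt : ∀ i, h i < a) : StrictMono (Fin.snoc (α := fun _ => ℕ) h a) := by
  intro i j hij
  induction j using Fin.lastCases with
  | last =>
    induction i using Fin.lastCases with
    | last => exact absurd hij (lt_irrefl _)
    | cast i => simpa using hlt i
  | cast j =>
    induction i using Fin.lastCases with
    | last => exact absurd hij (not_lt.2 (Fin.le_last _))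
    | cast i => simpa using hmono (Fin.castSucc_lt_castSucc_iff.1 hij)

lemma strictMono_of_forall_mem_Ico {m : ℕ} {J M : ℕ → ℕ} (hMJ : ∀ i, M i ≤ J (i + 1))
    {h : Fin m → ℕ} (hh : ∀ i : Fin m, h i ∈ Ico (J i) (M i)) : StrictMono h := by
  have step : ∀ (i : ℕ) (hi : i + 1 < m), h ⟨i, by omega⟩ < h ⟨i + 1, hi⟩ := fun i hi =>
    (mem_Ico.1 (hh ⟨i, by omega⟩)).2.trans_le ((hMJ i).trans (mem_Ico.1 (hh ⟨i + 1, hi⟩)).1)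
  rintro ⟨i, hi⟩ ⟨j, hj⟩ hij
  change i < j at hij
  induction j, hij using Nat.le_induction with
  | base => exact step i hj
  | succ j hij ih => exact (ih (by omega)).trans (step j hj)

section HoleVector

variable {n k : ℕ} {z : Finset ℕ}

lemma range_sdiff_image_hnth (hz : z ⊆ range n) (hzk : z.card = k) :
    range n \ univ.image (fun i : Fin (n - k) => hnth n z i) = z := by
  have hcard : (holes n z).card = n + 1 - k := by
    rw [card_holes (hz.trans (range_subset_range.2 n.le_succ)), hzk]
  have hkn : k ≤ n := hzk ▸ card_range n ▸ card_le_card hz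
  have hmono : StrictMono (fun i : Fin (n - k) => hnth n z i) := fun i j hij =>
    nthElt_lt_nthElt hij (by omega)
  have hsub : univ.image (fun i : Fin (n - k) => hnth n z i) ⊆ range n \ z := by
    intro a ha
    obtain ⟨i, -, rfl⟩ := mem_image.1 ha
    have hmem := nthElt_mem (s := holes n z) (i := i) (by omega)
    have hlast := nthElt_lt_nthElt (s := holes n z) i.2 (by omega)
    have := hnth_le n z (n - k)
    rw [holes, mem_sdiff] at hmem
    rw [mem_sdiff, mem_range]
    unfold hnth at this ⊢
    exact ⟨by omega, hmem.2⟩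
  have hcard_image : (univ.image fun i : Fin (n - k) => hnth n z i).card = n - k := by
    rw [card_image_of_injective _ hmono.injective, card_univ, Fintype.card_fin]
  rw [eq_of_subset_of_card_le hsub (by rw [card_sdiff_of_subset hz, card_range, hzk,
    hcard_image]), Finset.sdiff_sdiff_eq_self hz]

variable {m : ℕ} {h : Fin m → ℕ}

lemma hnth_range_sdiff_image (hmono : StrictMono h) (hlt : ∀ i, h i < n) (i : Fin m) :
    hnth n (range n \ univ.image h) i = h i := by
  have hholes :
      holes n (range n \ univ.image h) = univ.image (Fin.snoc (α := fun _ => ℕ) h n) := by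
    ext a
    simp only [holes, mem_sdiff, mem_range, mem_image, mem_univ, true_and, Fin.exists_fin_succ',
      Fin.snoc_castSucc, Fin.snoc_last]
    constructor
    · rintro ⟨ha, hna⟩
      by_cases han : a = n
      · exact Or.inr han.symm
      · exact Or.inl (by_contra fun hni => hna ⟨by omega, fun ⟨i, hi⟩ => hni ⟨i, hi⟩⟩)
    · rintro (⟨i, rfl⟩ | rfl)
      · exact ⟨(hlt i).trans n.lt_succ_self, fun hi => hi.2 ⟨i, rfl⟩⟩
      · exact ⟨n.lt_succ_self, fun hn => lt_irrefl n hn.1⟩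
  rw [hnth, hholes, ← Fin.val_castSucc, nthElt_image_univ (Fin.strictMono_snoc hmono hlt),
    Fin.snoc_castSucc]

lemma card_range_sdiff_image (hmono : StrictMono h) (hlt : ∀ i, h i < n) :
    (range n \ univ.image h).card = n - m := by
  have hsub : univ.image h ⊆ range n := fun _ ha => by
    obtain ⟨i, -, rfl⟩ := mem_image.1 ha
    exact mem_range.2 (hlt i)
  rw [card_sdiff_of_subset hsub, card_range, card_image_of_injective _ hmono.injective,
    card_univ, Fintype.card_fin]

end HoleVector

lemma sum_filter_hnth_mem_Ico {β : Type*} [AddCommMonoid β] {n k : ℕ} (hkn : k ≤ n)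
    {J M : ℕ → ℕ} (hMJ : ∀ i, M i ≤ J (i + 1)) (hMn : ∀ i, M i ≤ n)
    (F : (Fin (n - k) → ℕ) → β) :
    ∑ z ∈ (range n).powerset.filter
        (fun z => z.card = k ∧ ∀ i < n - k, J i ≤ hnth n z i ∧ hnth n z i < M i),
      F (fun i => hnth n z i)
      = ∑ h ∈ Fintype.piFinset (fun i : Fin (n - k) => Ico (J i) (M i)), F h := by
  refine sum_nbij' (fun z i => hnth n z i) (fun h => range n \ univ.image h) ?_ ?_ ?_ ?_
    (fun _ _ => rfl)
  · intro z hz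
    simp only [mem_filter, mem_powerset] at hz
    simpa [Fintype.mem_piFinset, mem_Ico] using fun i : Fin (n - k) => hz.2.2 i i.2
  · intro h hh
    rw [Fintype.mem_piFinset] at hh
    have hmono := strictMono_of_forall_mem_Ico hMJ hh
    have hlt : ∀ i, h i < n := fun i => (mem_Ico.1 (hh i)).2.trans_le (hMn i)
    simp only [mem_filter, mem_powerset]
    refine ⟨sdiff_subset, by rw [card_range_sdiff_image hmono hlt]; omega, fun i hi => ?_⟩
    rw [show i = ((⟨i, hi⟩ : Fin (n - k)) : ℕ) from rfl, hnth_range_sdiff_image hmono hlt]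
    exact mem_Ico.1 (hh _)
  · intro z hz
    simp only [mem_filter, mem_powerset] at hz
    exact range_sdiff_image_hnth hz.1 hz.2.1
  · intro h hh
    rw [Fintype.mem_piFinset] at hh
    have hmono := strictMono_of_forall_mem_Ico hMJ hh
    funext i
    exact hnth_range_sdiff_image hmono (fun i => (mem_Ico.1 (hh i)).2.trans_le (hMn i)) i

lemma sum_piFinset_Ico_pow {ι : Type*} [Fintype ι] [DecidableEq ι] (J M : ι → ℕ) :
    ∑ h ∈ Fintype.piFinset (fun i => Ico (J i) (M i)), (X : ℤ[X]) ^ (2 * ∑ i, (h i - J i))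
      = ∏ i, qInt (M i - J i) := by
  have hfactor : ∀ i,
      qInt (M i - J i) = ∑ j ∈ Ico (J i) (M i), (X : ℤ[X]) ^ (2 * (j - J i)) := fun i => by
    simp [qInt, sum_Ico_eq_sum_range]
  simp_rw [hfactor, prod_univ_sum, mul_sum, prod_pow_eq_pow_sum]

lemma sum_filter_hnth_pow_eq_prod_qInt {n k : ℕ} (hkn : k ≤ n)
    {J M : ℕ → ℕ} (hMJ : ∀ i, M i ≤ J (i + 1)) (hMn : ∀ i, M i ≤ n) :
    ∑ z ∈ (range n).powerset.filter
        (fun z => z.card = k ∧ ∀ i < n - k, J i ≤ hnth n z i ∧ hnth n z i < M i),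
      (X : ℤ[X]) ^ (2 * ∑ i ∈ range (n - k), (hnth n z i - J i))
      = ∏ i ∈ range (n - k), qInt (M i - J i) := by
  simp_rw [sum_range, prod_range]
  rw [sum_filter_hnth_mem_Ico hkn hMJ hMn (fun h => (X : ℤ[X]) ^ (2 * ∑ i, (h i - J i))),
    sum_piFinset_Ico_pow]

section Inversions

open Equiv

variable {k : ℕ}

def consPerm (p : Fin (k + 1)) (τ : Perm (Fin k)) : Perm (Fin (k + 1)) :=
  (finSuccEquiv k).trans ((Equiv.optionCongr τ).trans (finSuccEquiv' p).symm)

@[simp] lemma consPerm_zero (p : Fin (k + 1)) (τ : Perm (Fin k)) : consPerm p τ 0 = p := by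
  simp [consPerm, finSuccEquiv_zero]

@[simp] lemma consPerm_succ (p : Fin (k + 1)) (τ : Perm (Fin k)) (i : Fin k) :
    consPerm p τ i.succ = p.succAbove (τ i) := by
  simp [consPerm, finSuccEquiv_succ]

lemma consPerm_bijective :
    Function.Bijective (fun pτ : Fin (k + 1) × Perm (Fin k) => consPerm pτ.1 pτ.2) := by
  refine (Fintype.bijective_iff_injective_and_card _).2 ⟨?_, ?_⟩
  · rintro ⟨p, τ⟩ ⟨p', τ'⟩ h
    have hp : p = p' := by simpa using congrArg (· 0) h
    subst hp
    have hτ : τ = τ' := Equiv.ext fun i => by simpa using congrArg (· i.succ) h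
    rw [hτ]
  · simp [Fintype.card_perm, Nat.factorial_succ]

lemma card_filter_apply_lt_apply_zero (σ : Perm (Fin (k + 1))) :
    #{b | 0 < b ∧ σ b < σ 0} = σ 0 := by
  rw [card_filter]
  have hpos : ∀ b, σ b < σ 0 → 0 < b := fun b hb =>
    Fin.pos_iff_ne_zero.2 fun h => (lt_irrefl _) (h ▸ hb)
  calc (∑ b, if 0 < b ∧ σ b < σ 0 then 1 else 0)
      = ∑ b, if σ b < σ 0 then 1 else 0 :=
        sum_congr rfl fun b _ => if_congr ⟨And.right, fun h => ⟨hpos b h, h⟩⟩ rfl rfl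
    _ = ∑ c, if c < σ 0 then 1 else 0 := Equiv.sum_comp σ (fun c => if c < σ 0 then 1 else 0)
    _ = σ 0 := by rw [← card_filter, filter_gt_eq_Iio, Fin.card_Iio]

lemma invCount_eq_apply_zero_add (σ : Perm (Fin (k + 1))) :
    invCount σ = σ 0 + #{p : Fin k × Fin k | p.1 < p.2 ∧ σ p.2.succ < σ p.1.succ} := by
  rw [invCount, card_filter, Fintype.sum_prod_type, Fin.sum_univ_succ, ← card_filter,
    card_filter_apply_lt_apply_zero, card_filter, Fintype.sum_prod_type]
  congr 1
  refine sum_congr rfl fun i _ => ?_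
  rw [Fin.sum_univ_succ]
  simp [Fin.succ_lt_succ_iff, (Fin.succ_pos i).not_gt]

lemma invCount_consPerm (p : Fin (k + 1)) (τ : Perm (Fin k)) :
    invCount (consPerm p τ) = p + invCount τ := by
  rw [invCount_eq_apply_zero_add, consPerm_zero]
  simp only [consPerm_succ, Fin.succAbove_lt_succAbove_iff]
  rfl

lemma sum_pow_invCount {R : Type*} [CommSemiring R] (t : R) (k : ℕ) :
    ∑ σ : Perm (Fin k), t ^ invCount σ = ∏ j ∈ range k, ∑ i ∈ range (j + 1), t ^ i := by
  induction k with
  | zero => simp [invCount]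
  | succ k ih =>
    rw [← Fintype.sum_bijective _ consPerm_bijective _ _ fun _ => rfl, Fintype.sum_prod_type]
    simp_rw [invCount_consPerm, pow_add, ← mul_sum, ← sum_mul, ih, prod_range_succ,
      Fin.sum_univ_eq_sum_range (fun i => t ^ i), mul_comm]

end Inversions

lemma sum_X_pow_two_mul_invCount (k : ℕ) :
    ∑ σ : Equiv.Perm (Fin k), (X : ℤ[X]) ^ (2 * invCount σ) = qFact k := by
  simp_rw [pow_mul, sum_pow_invCount, qFact, qInt, pow_mul]

theorem graded_fork_count_general (n k : ℕ) (hkn : k ≤ n) (x y : Finset ℕ) (d : ℕ) :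
    ∑ z ∈ (Finset.range n).powerset.filter (fun z => z.card = k ∧ OrientedZ n k x y z),
      ∑ σ : Equiv.Perm (Fin k),
        (Polynomial.X : Polynomial ℤ) ^
          (d + 2 * invCount σ +
            2 * ∑ i ∈ Finset.range (n - k),
                  (hnth n z i - max (hnth n x i) (hnth n y i)))
      = Polynomial.X ^ d * qFact k *
          ∏ i ∈ Finset.range (n - k),
            qInt (min (hnth n x (i + 1)) (hnth n y (i + 1))
              - max (hnth n x i) (hnth n y i)) := by
  simp_rw [pow_add, ← sum_mul, ← mul_sum, sum_X_pow_two_mul_invCount]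
  congr 1
  exact sum_filter_hnth_pow_eq_prod_qInt hkn (fun _ => (min_le_left _ _).trans (le_max_left _ _))
    (fun _ => (min_le_left _ _).trans (hnth_le _ _ _))

/-- Graded count of enhanced oriented fork diagrams:
`Σ_z Σ_{σ ∈ S_k} q^{d + 2 inv(σ) + 2 Σ_i (h_i^z − j_i)} = q^d (k)!_{q²} Π_i (l_i)_{q²}`. -/
theorem graded_fork_count (n k : ℕ) (hkn : k ≤ n) (x y : Finset ℕ)
    (hx : x ⊆ Finset.range n) (hy : y ⊆ Finset.range n)
    (hxk : x.card = k) (hyk : y.card = k) (hfar : ¬ TooFar k x y)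
    (d : ℕ) (hd : d = ∑ i ∈ Finset.range k, ((nthElt x i : ℤ) - (nthElt y i : ℤ)).natAbs) :
    ∑ z ∈ (Finset.range n).powerset.filter (fun z => z.card = k ∧ OrientedZ n k x y z),
      ∑ σ : Equiv.Perm (Fin k),
        (Polynomial.X : Polynomial ℤ) ^
          (d + 2 * invCount σ +
            2 * ∑ i ∈ Finset.range (n - k),
                  (hnth n z i - max (hnth n x i) (hnth n y i)))
      = Polynomial.X ^ d * qFact k *
          ∏ i ∈ Finset.range (n - k),
            qInt (min (hnth n x (i + 1)) (hnth n y (i + 1))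
              - max (hnth n x i) (hnth n y i)) :=
  graded_fork_count_general n k hkn x y d
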